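/- For nonnegative Hermitian n×n matrices A and B, det(A+B)^{1/n} ≥ det(A)^{1/n} + det(B)^{1/n} (Minkowski's determinant inequality for Hermitian positive semidefinite matrices). -/

import Mathlib

/-!
After a simultaneous congruence `A = Sᴴ S`, `B = Sᴴ C S` (possible once `A` is invertible), the
inequality reduces to `1 + det C ^ (1/n) ≤ det (1 + C) ^ (1/n)` for a positive semidefinite `C`.
In an eigenbasis of `C` this is the superadditivity of the geometric mean,
`G(a) + G(b) ≤ G(a + b)`, which follows from AM-GM applied to `a / (a + b)` and `b / (a + b)`.
If neither `A` nor `B` is invertible, the left-hand side vanishes.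
-/

open Matrix
open scoped ComplexOrder

noncomputable section

namespace Real

variable {ι : Type*} [Fintype ι] [Nonempty ι]

theorem prod_rpow_inv_card_le_inv_card_mul_sum {z : ι → ℝ} (hz : ∀ i, 0 ≤ z i) :
    (∏ i, z i) ^ (Fintype.card ι : ℝ)⁻¹ ≤ (Fintype.card ι : ℝ)⁻¹ * ∑ i, z i := by
  rw [← finsetProd_rpow _ _ fun i _ => hz i, Finset.mul_sum]
  refine geom_mean_le_arith_mean_weighted _ _ _ (fun _ _ => by positivity) ?_ fun i _ => hz i
  simp [Finset.card_univ]

theorem geom_mean_add_le {a b : ι → ℝ} (ha : ∀ i, 0 ≤ a i) (hb : ∀ i, 0 ≤ b i) :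
    (∏ i, a i) ^ (Fintype.card ι : ℝ)⁻¹ + (∏ i, b i) ^ (Fintype.card ι : ℝ)⁻¹
      ≤ (∏ i, (a i + b i)) ^ (Fintype.card ι : ℝ)⁻¹ := by
  set p : ℝ := (Fintype.card ι : ℝ)⁻¹
  set c : ι → ℝ := fun i => a i + b i
  have hc : ∀ i, 0 ≤ c i := fun i => add_nonneg (ha i) (hb i)
  have hcp : 0 ≤ (∏ i, c i) ^ p := rpow_nonneg (Finset.prod_nonneg fun i _ => hc i) p
  -- `f i = f i / c i * c i` holds also when `c i = 0`, since then `f i = 0`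
  have hscale : ∀ f : ι → ℝ, (∀ i, 0 ≤ f i) → (∀ i, f i ≤ c i) →
      (∏ i, f i) ^ p = (∏ i, f i / c i) ^ p * (∏ i, c i) ^ p := by
    intro f hf hfc
    rw [← mul_rpow (Finset.prod_nonneg fun i _ => div_nonneg (hf i) (hc i))
      (Finset.prod_nonneg fun i _ => hc i), ← Finset.prod_mul_distrib]
    congr 1
    refine Finset.prod_congr rfl fun i _ => (div_mul_cancel_of_imp fun h => ?_).symm
    linarith [hf i, hfc i]
  have hratio : p * ∑ i, a i / c i + p * ∑ i, b i / c i ≤ 1 := by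
    rw [← mul_add, ← Finset.sum_add_distrib]
    calc p * ∑ i, (a i / c i + b i / c i) ≤ p * ∑ _i : ι, (1 : ℝ) := by
          gcongr with i
          rw [← add_div]
          exact div_self_le_one _
      _ = 1 := by simp [p, Finset.card_univ]
  calc (∏ i, a i) ^ p + (∏ i, b i) ^ p
      = ((∏ i, a i / c i) ^ p + (∏ i, b i / c i) ^ p) * (∏ i, c i) ^ p := by
        rw [hscale a ha fun i => le_add_of_nonneg_right (hb i),
          hscale b hb fun i => le_add_of_nonneg_left (ha i), add_mul]
    _ ≤ (p * ∑ i, a i / c i + p * ∑ i, b i / c i) * (∏ i, c i) ^ p :=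
        mul_le_mul_of_nonneg_right
          (add_le_add (prod_rpow_inv_card_le_inv_card_mul_sum fun i => div_nonneg (ha i) (hc i))
            (prod_rpow_inv_card_le_inv_card_mul_sum fun i => div_nonneg (hb i) (hc i))) hcp
    _ ≤ (∏ i, c i) ^ p := mul_le_of_le_one_left hcp hratio

end Real

namespace Matrix

variable {𝕜 : Type*} [RCLike 𝕜] {ι : Type*} [Fintype ι] [DecidableEq ι]

theorem IsHermitian.ofReal_re_det {A : Matrix ι ι 𝕜} (hA : A.IsHermitian) :
    ((RCLike.re A.det : ℝ) : 𝕜) = A.det := by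
  rw [hA.det_eq_prod_eigenvalues, ← RCLike.ofReal_prod, RCLike.ofReal_re]

theorem IsHermitian.re_det {A : Matrix ι ι 𝕜} (hA : A.IsHermitian) :
    RCLike.re A.det = ∏ i, hA.eigenvalues i := by
  rw [hA.det_eq_prod_eigenvalues, ← RCLike.ofReal_prod, RCLike.ofReal_re]

theorem IsHermitian.det_cfc {A : Matrix ι ι 𝕜} (hA : A.IsHermitian) (f : ℝ → ℝ) :
    (cfc f A).det = ∏ i, (f (hA.eigenvalues i) : 𝕜) := by
  simp [hA.cfc_eq, IsHermitian.cfc, -Unitary.conjStarAlgAut_apply]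

theorem IsHermitian.re_det_one_add {A : Matrix ι ι 𝕜} (hA : A.IsHermitian) :
    RCLike.re (1 + A).det = ∏ i, (1 + hA.eigenvalues i) := by
  have h : 1 + A = cfc (fun x : ℝ => 1 + x) A := by
    rw [cfc_add .., cfc_const_one .., cfc_id' ..]
  rw [h, hA.det_cfc, ← RCLike.ofReal_prod, RCLike.ofReal_re]

theorem PosSemidef.re_det_nonneg {A : Matrix ι ι 𝕜} (hA : A.PosSemidef) :
    0 ≤ RCLike.re A.det :=
  (RCLike.nonneg_iff.mp hA.det_nonneg).1

open scoped MatrixOrder in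
theorem PosDef.exists_posSemidef_det_eq {A B : Matrix ι ι 𝕜} (hA : A.PosDef)
    (hB : B.PosSemidef) :
    ∃ C : Matrix ι ι 𝕜, C.PosSemidef ∧ B.det = A.det * C.det ∧
      (A + B).det = A.det * (1 + C).det := by
  obtain ⟨S, rfl⟩ := CStarAlgebra.nonneg_iff_eq_star_mul_self.mp hA.posSemidef.nonneg
  have hS : IsUnit S.det := isUnit_of_mul_isUnit_right <| by
    simpa only [det_mul] using (isUnit_iff_isUnit_det _).mp hA.isUnit
  set C := (S⁻¹)ᴴ * B * S⁻¹
  have hBC : B = Sᴴ * C * S :=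
    calc B = (S⁻¹ * S)ᴴ * B * (S⁻¹ * S) := by
          rw [nonsing_inv_mul S hS, conjTranspose_one, Matrix.one_mul, Matrix.mul_one]
      _ = Sᴴ * C * S := by simp only [C, conjTranspose_mul, Matrix.mul_assoc]
  have hABC : star S * S + B = Sᴴ * (1 + C) * S := by
    rw [hBC, star_eq_conjTranspose, Matrix.mul_add, Matrix.add_mul, Matrix.mul_one]
  refine ⟨C, hB.conjTranspose_mul_mul_same _, ?_, ?_⟩
  · rw [hBC]; simp only [det_mul, star_eq_conjTranspose]; ring
  · rw [hABC]; simp only [det_mul, star_eq_conjTranspose]; ring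

variable [Nonempty ι]

theorem PosSemidef.one_add_re_det_rpow_le {C : Matrix ι ι 𝕜} (hC : C.PosSemidef) :
    1 + RCLike.re C.det ^ (Fintype.card ι : ℝ)⁻¹
      ≤ RCLike.re (1 + C).det ^ (Fintype.card ι : ℝ)⁻¹ := by
  have h := Real.geom_mean_add_le (fun _ => zero_le_one) hC.eigenvalues_nonneg
  rwa [Finset.prod_const_one, Real.one_rpow, ← hC.1.re_det, ← hC.1.re_det_one_add] at h

theorem PosDef.re_det_rpow_add_le {A B : Matrix ι ι 𝕜} (hA : A.PosDef) (hB : B.PosSemidef) :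
    RCLike.re A.det ^ (Fintype.card ι : ℝ)⁻¹ + RCLike.re B.det ^ (Fintype.card ι : ℝ)⁻¹
      ≤ RCLike.re (A + B).det ^ (Fintype.card ι : ℝ)⁻¹ := by
  set p : ℝ := (Fintype.card ι : ℝ)⁻¹
  obtain ⟨C, hC, hBdet, hABdet⟩ := hA.exists_posSemidef_det_eq hB
  have hA₀ := hA.posSemidef.re_det_nonneg
  have h1C := PosSemidef.one.add hC
  rw [hBdet, hABdet, ← hC.1.ofReal_re_det, ← h1C.1.ofReal_re_det, RCLike.re_mul_ofReal,
    RCLike.re_mul_ofReal, Real.mul_rpow hA₀ hC.re_det_nonneg, Real.mul_rpow hA₀ h1C.re_det_nonneg]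
  calc RCLike.re A.det ^ p + RCLike.re A.det ^ p * RCLike.re C.det ^ p
      = RCLike.re A.det ^ p * (1 + RCLike.re C.det ^ p) := by ring
    _ ≤ RCLike.re A.det ^ p * RCLike.re (1 + C).det ^ p :=
        mul_le_mul_of_nonneg_left hC.one_add_re_det_rpow_le (Real.rpow_nonneg hA₀ p)

theorem PosSemidef.re_det_rpow_add_le {A B : Matrix ι ι 𝕜} (hA : A.PosSemidef)
    (hB : B.PosSemidef) :
    RCLike.re A.det ^ (Fintype.card ι : ℝ)⁻¹ + RCLike.re B.det ^ (Fintype.card ι : ℝ)⁻¹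
      ≤ RCLike.re (A + B).det ^ (Fintype.card ι : ℝ)⁻¹ := by
  by_cases hA₀ : A.det ≠ 0
  · exact (hA.posDef_iff_det_ne_zero.mpr hA₀).re_det_rpow_add_le hB
  by_cases hB₀ : B.det ≠ 0
  · simpa only [add_comm] using (hB.posDef_iff_det_ne_zero.mpr hB₀).re_det_rpow_add_le hA
  rw [not_not.mp hA₀, not_not.mp hB₀, map_zero, Real.zero_rpow (by positivity), zero_add]
  exact Real.rpow_nonneg (hA.add hB).re_det_nonneg _

end Matrix

/-- Minkowski's determinant inequality for Hermitian positive semidefinite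
matrices: `det(A+B)^{1/n} ≥ det(A)^{1/n} + det(B)^{1/n}`. -/
theorem minkowski_det_inequality (n : ℕ) (hn : 0 < n)
    (A B : Matrix (Fin n) (Fin n) ℂ) (hA : A.PosSemidef) (hB : B.PosSemidef) :
    A.det.re ^ ((n : ℝ)⁻¹) + B.det.re ^ ((n : ℝ)⁻¹)
      ≤ (A + B).det.re ^ ((n : ℝ)⁻¹) := by
  have : Nonempty (Fin n) := Fin.pos_iff_nonempty.mp hn
  simpa only [Fintype.card_fin, RCLike.re_to_complex] using hA.re_det_rpow_add_le hB

end
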